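/- arXiv:1804.07069 — 2 statements merged into one kernel-verified Lean document; each statement's English description precedes it below -/
import Mathlib

section
/- Let X = (X_s)_{s≥0} be a real-valued process with X_0 = 0, almost surely càdlàg paths and independent increments, which is continuous in probability in the sense that for every fixed r > 0 one has X_{r−} = X_r almost surely. Fix t > 0 and let Y_s = X_t − X_{(t−s)−}. Then for all 0 ≤ u ≤ v ≤ t, the increment Y_v − Y_u has the same law as X_{t−u} − X_{t−v}. -/
open MeasureTheory ProbabilityTheory Filter Set

noncomputable section

/-- Left limit of a path, with the convention `x(u−) = x(0)` for `u ≤ 0`. -/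
def llim (x : ℝ → ℝ) (u : ℝ) : ℝ :=
  if u ≤ 0 then x 0 else Function.leftLim x u

/-- A path `x : ℝ → ℝ` is càdlàg (on `[0,∞)`): right-continuous at every `u ≥ 0`,
with left limits at every `u > 0`. -/
def IsCadlag (x : ℝ → ℝ) : Prop :=
  (∀ u : ℝ, 0 ≤ u → ContinuousWithinAt x (Set.Ici u) u) ∧
  (∀ u : ℝ, 0 < u → Tendsto x (nhdsWithin u (Set.Iio u)) (nhds (Function.leftLim x u)))

/-- The process `X` has independent increments. -/
def IndepIncrements {Ω : Type*} [MeasurableSpace Ω] (P : Measure Ω) (X : ℝ → Ω → ℝ) : Prop :=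
  ∀ (n : ℕ) (s : Fin (n + 1) → ℝ), (∀ i, 0 ≤ s i) → Monotone s →
    iIndepFun (m := fun _ : Fin n => (inferInstance : MeasurableSpace ℝ))
      (fun i ω => X (s i.succ) ω - X (s i.castSucc) ω) P

/-- The time reversed process `Y_s = X_t - X_{(t-s)-}`. -/
def Yrev {Ω : Type*} (X : ℝ → Ω → ℝ) (t s : ℝ) (ω : Ω) : ℝ :=
  X t ω - llim (fun u => X u ω) (t - s)

/-- The process `V_s = e^{-Y_s} ∫_0^s e^{Y_u} du`. -/
def Vproc {Ω : Type*} (X : ℝ → Ω → ℝ) (t s : ℝ) (ω : Ω) : ℝ :=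
  Real.exp (-(Yrev X t s ω)) * ∫ u in (0 : ℝ)..s, Real.exp (Yrev X t u ω)

/-- The exponential functional `I_s = ∫_0^s e^{-X_u} du`. -/
def Ifun {Ω : Type*} (X : ℝ → Ω → ℝ) (s : ℝ) (ω : Ω) : ℝ :=
  ∫ u in (0 : ℝ)..s, Real.exp (-(X u ω))

/-- The class `𝒞` of test functions. -/
def MemC (f : ℝ → ℝ) : Prop :=
  ContDiff ℝ 2 f ∧
  (∃ D : ℝ, ∀ y : ℝ, |f y| ≤ D ∧ |deriv f y| ≤ D ∧ |deriv (deriv f) y| ≤ D) ∧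
  (∃ D : ℝ, ∀ y : ℝ, 0 ≤ y → |deriv f y * y| ≤ D) ∧
  (∃ D : ℝ, ∀ y : ℝ, 0 ≤ y → |deriv (deriv f) y * y ^ 2| ≤ D) ∧
  f 0 = 0 ∧ deriv f 0 = 0

/-- `X` is a PII semimartingale with absolutely continuous characteristics `(b, c, K)`,
satisfying the integrability conditions (2) and (3) of the paper. -/
def HasACCharacteristics {Ω : Type*} [MeasurableSpace Ω] (P : Measure Ω) (X : ℝ → Ω → ℝ)
    (b c : ℝ → ℝ) (K : ℝ → Measure ℝ) : Prop :=
  (∀ u : ℝ, 0 ≤ c u) ∧ (∀ u : ℝ, K u {0} = 0) ∧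
  (∀ t : ℝ, 0 < t → IntegrableOn b (Set.Ioc 0 t) ∧ IntegrableOn c (Set.Ioc 0 t)) ∧
  (∀ r s : ℝ, 0 ≤ r → r ≤ s → ∀ lam : ℝ,
    ∫ ω, Complex.exp (Complex.I * (lam : ℂ) * ((X s ω - X r ω : ℝ) : ℂ)) ∂P =
      Complex.exp (∫ u in r..s,
        (Complex.I * (lam : ℂ) * (b u : ℂ) - (lam : ℂ) ^ 2 * (c u : ℂ) / 2 +
          ∫ x : ℝ, (Complex.exp (Complex.I * (lam : ℂ) * (x : ℂ)) - 1
            - Complex.I * (lam : ℂ) * (x : ℂ)) ∂(K u)))) ∧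
  (∀ t : ℝ, 0 < t →
    (∫⁻ u in Set.Ioc (0 : ℝ) t, ∫⁻ x : ℝ, ENNReal.ofReal (min (x ^ 2) 1) ∂(K u)) < ⊤ ∧
    (∫⁻ u in Set.Ioc (0 : ℝ) t,
      ∫⁻ x in {x : ℝ | 1 < |x|}, ENNReal.ofReal (Real.exp |x|) ∂(K u)) < ⊤)

/-- `ā_s = -b_{t-s} + c_{t-s}/2 + ∫ (e^{-x} - 1 + x) K_{t-s}(dx)`. -/
def abar (b c : ℝ → ℝ) (K : ℝ → Measure ℝ) (t s : ℝ) : ℝ :=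
  -b (t - s) + c (t - s) / 2 + ∫ x : ℝ, (Real.exp (-x) - 1 + x) ∂(K (t - s))

/-- The generator `𝒜_s` of the Markov process `V`. -/
def genA (b c : ℝ → ℝ) (K : ℝ → Measure ℝ) (t s : ℝ) (f : ℝ → ℝ) (y : ℝ) : ℝ :=
  (1 + y * abar b c K t s) * deriv f y + (1 / 2) * c (t - s) * y ^ 2 * deriv (deriv f) y +
    ∫ x : ℝ, (f (y * Real.exp (-x)) - f y - deriv f y * y * (Real.exp (-x) - 1)) ∂(K (t - s))

/-- `X` is a Lévy process with triplet `(b0, c0, K0)`. -/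
def IsLevy {Ω : Type*} [MeasurableSpace Ω] (P : Measure Ω) (X : ℝ → Ω → ℝ)
    (b0 c0 : ℝ) (K0 : Measure ℝ) : Prop :=
  (∀ᵐ ω ∂P, X 0 ω = 0) ∧
  (∀ᵐ ω ∂P, IsCadlag fun s => X s ω) ∧
  (∀ s : ℝ, Measurable (X s)) ∧
  IndepIncrements P X ∧
  (∀ r s : ℝ, 0 ≤ r → r ≤ s →
    P.map (fun ω => X s ω - X r ω) = P.map (X (s - r))) ∧
  (∀ r : ℝ, 0 < r → ∀ᵐ ω ∂P, Function.leftLim (fun u => X u ω) r = X r ω) ∧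
  0 ≤ c0 ∧ K0 {0} = 0 ∧
  (∫⁻ x : ℝ, ENNReal.ofReal (min (x ^ 2) 1) ∂K0) < ⊤ ∧
  (∀ s : ℝ, 0 ≤ s → ∀ lam : ℝ,
    ∫ ω, Complex.exp (Complex.I * (lam : ℂ) * ((X s ω : ℝ) : ℂ)) ∂P =
      Complex.exp ((s : ℂ) * (Complex.I * (lam : ℂ) * (b0 : ℂ) - (lam : ℂ) ^ 2 * (c0 : ℂ) / 2 +
        ∫ x : ℝ, (Complex.exp (Complex.I * (lam : ℂ) * (x : ℂ)) - 1
          - Complex.I * (lam : ℂ) * (x : ℂ)) ∂K0)))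

/-- `a_0 = -b_0 + c_0/2 + ∫ (e^{-x} - 1 + x) K_0(dx)`. -/
def a0 (b0 c0 : ℝ) (K0 : Measure ℝ) : ℝ :=
  -b0 + c0 / 2 + ∫ x : ℝ, (Real.exp (-x) - 1 + x) ∂K0

/-- Condition (2): `∫ (x² ∧ 1) K_0(dx) < ∞`. -/
def LevyCond1 (K0 : Measure ℝ) : Prop :=
  (∫⁻ x : ℝ, ENNReal.ofReal (min (x ^ 2) 1) ∂K0) < ⊤

/-- Condition (3): `∫_{|x|>1} e^{|x|} K_0(dx) < ∞`. -/
def LevyCond2 (K0 : Measure ℝ) : Prop :=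
  (∫⁻ x in {x : ℝ | 1 < |x|}, ENNReal.ofReal (Real.exp |x|) ∂K0) < ⊤

/-- `I_∞ = ∫_0^∞ e^{-X_u} du` (defined via the Lebesgue integral of the
nonnegative integrand). -/
def Iinf {Ω : Type*} (X : ℝ → Ω → ℝ) (ω : Ω) : ℝ :=
  (∫⁻ u in Set.Ioi (0 : ℝ), ENNReal.ofReal (Real.exp (-(X u ω)))).toReal

theorem llim_zero (x : ℝ → ℝ) : llim x 0 = x 0 := by
  simp [llim]

theorem llim_of_pos (x : ℝ → ℝ) {u : ℝ} (hu : 0 < u) : llim x u = Function.leftLim x u := by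
  simp [llim, not_le.mpr hu]

theorem ae_llim_eq {Ω : Type*} [MeasurableSpace Ω] {P : Measure Ω} {X : ℝ → Ω → ℝ}
    (hcont : ∀ r : ℝ, 0 < r → ∀ᵐ ω ∂P, Function.leftLim (fun u => X u ω) r = X r ω)
    {r : ℝ} (hr : 0 ≤ r) : ∀ᵐ ω ∂P, llim (fun u => X u ω) r = X r ω := by
  rcases hr.eq_or_lt with rfl | hr
  · exact .of_forall fun ω => llim_zero _
  · filter_upwards [hcont r hr] with ω hω
    rw [llim_of_pos _ hr, hω]

theorem Yrev_sub_Yrev {Ω : Type*} (X : ℝ → Ω → ℝ) (t u v : ℝ) (ω : Ω) :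
    Yrev X t v ω - Yrev X t u ω = llim (fun s => X s ω) (t - u) - llim (fun s => X s ω) (t - v) := by
  simp only [Yrev]
  ring

theorem ae_Yrev_sub_Yrev_eq {Ω : Type*} [MeasurableSpace Ω] {P : Measure Ω} {X : ℝ → Ω → ℝ}
    (hcont : ∀ r : ℝ, 0 < r → ∀ᵐ ω ∂P, Function.leftLim (fun u => X u ω) r = X r ω)
    {t u v : ℝ} (hut : u ≤ t) (hvt : v ≤ t) :
    ∀ᵐ ω ∂P, Yrev X t v ω - Yrev X t u ω = X (t - u) ω - X (t - v) ω := by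
  filter_upwards [ae_llim_eq hcont (sub_nonneg.mpr hut), ae_llim_eq hcont (sub_nonneg.mpr hvt)]
    with ω hu hv
  rw [Yrev_sub_Yrev, hu, hv]

theorem stmt_2_general {Ω : Type*} [MeasurableSpace Ω] (P : Measure Ω)
    (X : ℝ → Ω → ℝ)
    (hcont : ∀ r : ℝ, 0 < r → ∀ᵐ ω ∂P, Function.leftLim (fun u => X u ω) r = X r ω)
    (t : ℝ) :
    ∀ u v : ℝ, 0 ≤ u → u ≤ v → v ≤ t →
      P.map (fun ω => Yrev X t v ω - Yrev X t u ω) =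
        P.map (fun ω => X (t - u) ω - X (t - v) ω) :=
  fun _ _ _ huv hvt => Measure.map_congr (ae_Yrev_sub_Yrev_eq hcont (huv.trans hvt) hvt)

/-- law of the increments of the time-reversed process. -/
theorem stmt_2 {Ω : Type*} [MeasurableSpace Ω] (P : Measure Ω) [IsProbabilityMeasure P]
    (X : ℝ → Ω → ℝ)
    (hX0 : ∀ᵐ ω ∂P, X 0 ω = 0)
    (hpaths : ∀ᵐ ω ∂P, IsCadlag fun s => X s ω)
    (hmeas : ∀ s : ℝ, Measurable (X s))
    (hindep : IndepIncrements P X)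
    (hcont : ∀ r : ℝ, 0 < r → ∀ᵐ ω ∂P, Function.leftLim (fun u => X u ω) r = X r ω)
    (t : ℝ) (ht : 0 < t) :
    ∀ u v : ℝ, 0 ≤ u → u ≤ v → v ≤ t →
      P.map (fun ω => Yrev X t v ω - Yrev X t u ω) =
        P.map (fun ω => X (t - u) ω - X (t - v) ω) :=
  stmt_2_general P X hcont t

end
end

section
/- Let f ∈ 𝒞 and define F(y,x) = f(y e^{−x}) − f(y) − f'(y) y (e^{−x} − 1) for y > 0 and x ∈ ℝ. Then there exists a constant C > 0 (depending only on D = sup_{y≥0} max(|f(y)|, |f'(y)|, |f'(y)y|, |f''(y)y²|)) such that for all y > 0 and all x ∈ ℝ: |F(y,x)| ≤ C ( e^{|x|} 1_{|x|>1} + x² 1_{|x|≤1} ). -/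
open MeasureTheory ProbabilityTheory Filter Set

noncomputable section

/-!
For `|x| > 1` the three terms of `F` are bounded by `D`, `D` and `D |e^{-x} - 1| ≤ D e^{|x|}`.
For `|x| ≤ 1`, Taylor's formula at `y` bounds `|F(y, x)|` by `sup |f''| · (y e^{-x} - y)²`, the
supremum over the segment between `y` and `y e^{-x}`. Every point of that segment is at least
`y / e`, so `|f''| ≤ e² D / y²` there, while `|y e^{-x} - y| ≤ 2 |x| y`.
-/

/-- `F(y, x)`, the integrand of the jump part of `genA`. -/
def jumpRemainder (f : ℝ → ℝ) (y x : ℝ) : ℝ :=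
  f (y * Real.exp (-x)) - f y - deriv f y * y * (Real.exp (-x) - 1)

lemma abs_sub_sub_deriv_mul_le {f : ℝ → ℝ} (hf : ContDiff ℝ 2 f) {a b L : ℝ}
    (hL : ∀ t ∈ uIcc a b, |deriv (deriv f) t| ≤ L) :
    |f b - f a - deriv f a * (b - a)| ≤ L * (b - a) ^ 2 := by
  have hf' : Differentiable ℝ f := hf.differentiable (by norm_num)
  have hf'' : Differentiable ℝ (deriv f) := by
    simpa only [iteratedDeriv_one] using hf.differentiable_iteratedDeriv' 1
  have hL0 : 0 ≤ L := (abs_nonneg _).trans (hL a left_mem_uIcc)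
  -- Mean value theorem for `f'`, then for `t ↦ f t - f'(a) t` whose derivative it bounds.
  have hslope : ∀ t ∈ uIcc a b, |deriv f t - deriv f a| ≤ L * |b - a| := fun t ht =>
    calc |deriv f t - deriv f a| ≤ L * |t - a| :=
          (convex_uIcc a b).norm_image_sub_le_of_norm_deriv_le (fun x _ => hf'' x) hL
            left_mem_uIcc ht
      _ ≤ L * |b - a| := mul_le_mul_of_nonneg_left (abs_sub_left_of_mem_uIcc ht) hL0
  have hg : ∀ t, HasDerivAt (fun s => f s - deriv f a * s) (deriv f t - deriv f a) t := fun t => by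
    have := (hf' t).hasDerivAt.sub ((hasDerivAt_id' t).const_mul (deriv f a))
    rwa [mul_one] at this
  have hmvt := (convex_uIcc a b).norm_image_sub_le_of_norm_deriv_le
    (fun t _ => (hg t).differentiableAt) (fun t ht => (hg t).deriv ▸ hslope t ht)
    left_mem_uIcc right_mem_uIcc
  simp only [Real.norm_eq_abs] at hmvt
  calc |f b - f a - deriv f a * (b - a)| = |f b - deriv f a * b - (f a - deriv f a * a)| := by
        ring_nf
    _ ≤ L * |b - a| * |b - a| := hmvt
    _ = L * (b - a) ^ 2 := by rw [mul_assoc, abs_mul_abs_self, sq]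

lemma abs_exp_neg_sub_one_le_exp_abs (x : ℝ) : |Real.exp (-x) - 1| ≤ Real.exp |x| := by
  have h1 : Real.exp (-x) ≤ Real.exp |x| := Real.exp_le_exp.mpr (neg_le_abs x)
  have h2 : 1 ≤ Real.exp |x| := Real.one_le_exp (abs_nonneg x)
  rw [abs_le]
  constructor <;> linarith [Real.exp_pos (-x)]

lemma abs_jumpRemainder_le_of_bounded {f : ℝ → ℝ} {D y : ℝ} (hy : 0 < y)
    (hf : ∀ t, 0 ≤ t → |f t| ≤ D) (hf' : |deriv f y * y| ≤ D) (x : ℝ) :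
    |jumpRemainder f y x| ≤ 3 * D * Real.exp |x| := by
  have hD : 0 ≤ D := (abs_nonneg _).trans hf'
  have hfz := hf (y * Real.exp (-x)) (by positivity)
  have hfy := hf y hy.le
  have hexp := abs_exp_neg_sub_one_le_exp_abs x
  have h1 : 1 ≤ Real.exp |x| := Real.one_le_exp (abs_nonneg x)
  calc |jumpRemainder f y x|
      ≤ |f (y * Real.exp (-x))| + |f y| + |deriv f y * y| * |Real.exp (-x) - 1| := by
        unfold jumpRemainder
        rw [← abs_mul]
        exact (abs_sub _ _).trans (add_le_add (abs_sub _ _) le_rfl)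
    _ ≤ D + D + D * Real.exp |x| := by gcongr
    _ ≤ 3 * D * Real.exp |x| := by nlinarith

lemma exp_neg_one_mul_le_of_mem_uIcc {x y t : ℝ} (hy : 0 < y) (hx : |x| ≤ 1)
    (ht : t ∈ uIcc y (y * Real.exp (-x))) : y * Real.exp (-1) ≤ t := by
  have hy' : y * Real.exp (-1) ≤ y :=
    mul_le_of_le_one_right hy.le (Real.exp_le_one_iff.mpr (by norm_num))
  have hz : y * Real.exp (-1) ≤ y * Real.exp (-x) := by
    gcongr; linarith [le_abs_self x]
  exact (le_min hy' hz).trans ht.1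

lemma abs_jumpRemainder_le_of_abs_le_one {f : ℝ → ℝ} {D y x : ℝ} (hf : ContDiff ℝ 2 f)
    (hf'' : ∀ t, 0 < t → |deriv (deriv f) t * t ^ 2| ≤ D) (hy : 0 < y) (hx : |x| ≤ 1) :
    |jumpRemainder f y x| ≤ 4 * Real.exp 2 * D * x ^ 2 := by
  set m := y * Real.exp (-1)
  have hm : 0 < m := by positivity
  have hL : ∀ t ∈ uIcc y (y * Real.exp (-x)), |deriv (deriv f) t| ≤ D / m ^ 2 := by
    intro t ht
    have hmt := exp_neg_one_mul_le_of_mem_uIcc hy hx ht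
    have ht0 : 0 < t := hm.trans_le hmt
    have hD : 0 ≤ D := (abs_nonneg _).trans (hf'' t ht0)
    calc |deriv (deriv f) t| ≤ D / t ^ 2 := by
          rw [le_div_iff₀ (by positivity), ← abs_of_pos (pow_pos ht0 2), ← abs_mul]
          exact hf'' t ht0
      _ ≤ D / m ^ 2 := by gcongr
  have hstep : |y * Real.exp (-x) - y| ≤ 2 * |x| * y := by
    have := Real.abs_exp_sub_one_le (x := -x) (by rwa [abs_neg])
    rw [abs_neg] at this
    calc |y * Real.exp (-x) - y| = y * |Real.exp (-x) - 1| := by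
          rw [← mul_sub_one, abs_mul, abs_of_pos hy]
      _ ≤ y * (2 * |x|) := by gcongr
      _ = 2 * |x| * y := by ring
  have hD : 0 ≤ D := (abs_nonneg _).trans (hf'' y hy)
  have hexp : Real.exp (-1) ^ 2 * Real.exp 2 = 1 := by
    rw [← Real.exp_nat_mul, ← Real.exp_add]; norm_num
  calc |jumpRemainder f y x|
      = |f (y * Real.exp (-x)) - f y - deriv f y * (y * Real.exp (-x) - y)| := by
        unfold jumpRemainder; ring_nf
    _ ≤ D / m ^ 2 * (y * Real.exp (-x) - y) ^ 2 := abs_sub_sub_deriv_mul_le hf hL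
    _ ≤ D / m ^ 2 * (2 * |x| * y) ^ 2 :=
        mul_le_mul_of_nonneg_left (sq_le_sq' (neg_le_of_abs_le hstep) (le_of_abs_le hstep))
          (by positivity)
    _ = 4 * Real.exp 2 * D * x ^ 2 := by
        field_simp
        rw [sq_abs]
        linear_combination (-4 * D * x ^ 2 * y ^ 2) * hexp

/-- bound on `F(y,x) = f(y e^{-x}) - f(y) - f'(y) y (e^{-x} - 1)`,
with a constant depending only on `D`. -/
theorem stmt_8 (D : ℝ) :
    ∃ C : ℝ, 0 < C ∧ ∀ f : ℝ → ℝ, MemC f →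
      (∀ y : ℝ, 0 ≤ y → |f y| ≤ D ∧ |deriv f y| ≤ D ∧ |deriv f y * y| ≤ D ∧
        |deriv (deriv f) y * y ^ 2| ≤ D) →
      ∀ y : ℝ, 0 < y → ∀ x : ℝ,
        |f (y * Real.exp (-x)) - f y - deriv f y * y * (Real.exp (-x) - 1)| ≤
          C * (if 1 < |x| then Real.exp |x| else x ^ 2) := by
  refine ⟨max (4 * Real.exp 2 * D) 1, lt_max_of_lt_right one_pos, fun f hf hb y hy x => ?_⟩
  have hD : 0 ≤ D := (abs_nonneg _).trans (hb 0 le_rfl).1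
  have hC : 4 * Real.exp 2 * D ≤ max (4 * Real.exp 2 * D) 1 := le_max_left _ _
  change |jumpRemainder f y x| ≤ _
  split_ifs with hx
  · have he : (3 : ℝ) ≤ 4 * Real.exp 2 := by linarith [Real.add_one_le_exp 2]
    calc |jumpRemainder f y x| ≤ 3 * D * Real.exp |x| :=
          abs_jumpRemainder_le_of_bounded hy (fun t ht => (hb t ht).1) (hb y hy.le).2.2.1 x
      _ ≤ 4 * Real.exp 2 * D * Real.exp |x| := by gcongr
      _ ≤ _ := by gcongr
  · calc |jumpRemainder f y x| ≤ 4 * Real.exp 2 * D * x ^ 2 :=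
          abs_jumpRemainder_le_of_abs_le_one hf.1 (fun t ht => (hb t ht.le).2.2.2) hy
            (not_lt.mp hx)
      _ ≤ _ := by gcongr

end
end
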